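/- arXiv:1106.2378 — 6 statements merged into one kernel-verified Lean document; each statement's English description precedes it below -/
import Mathlib

section
/- Let (E, F) be a monopoly-free set system with n elements, c a cost vector, S the cheapest feasible set, S* the set minimizing c(S)·2^{|S|−1}, and for each e ∈ S let T_e ∈ F be any feasible set with e ∉ T_e. Then 2^{n−|S*|} · Σ_{e∈S*} min_{T∈F: e∉T} c(T) ≤ |S*| · 2^{n−|S*|} · max_{e∈S} c(T'_e) ≤ 2^n · max_{e∈S} c(T'_e), where T'_e achieves min_{T∈F: e∉T} c(T). Consequently the frugality ratio of MP is at most 2^n. -/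
open Finset

theorem inf'_sum_avoiding_le_sup' {α : Type*} [DecidableEq α] {F : Finset (Finset α)}
    {c : α → ℝ} {S : Finset α} (hne : ∀ e, (F.filter (fun T => e ∉ T)).Nonempty)
    {T' : α → Finset α} (hS : S ∈ F) (hSne : S.Nonempty)
    (hcheap : ∀ T ∈ F, ∑ a ∈ S, c a ≤ ∑ a ∈ T, c a)
    (hT' : ∀ e ∈ S, T' e ∈ F ∧ e ∉ T' e ∧
      (∑ a ∈ T' e, c a) = (F.filter (fun T => e ∉ T)).inf' (hne e) (fun T => ∑ a ∈ T, c a))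
    (e : α) :
    (F.filter (fun T => e ∉ T)).inf' (hne e) (fun T => ∑ a ∈ T, c a) ≤
      S.sup' hSne fun e => ∑ a ∈ T' e, c a := by
  by_cases he : e ∈ S
  · exact (hT' e he).2.2 ▸ le_sup' (fun e => ∑ a ∈ T' e, c a) he
  · -- `S` itself avoids `e`, and being the cheapest feasible set it is no dearer than any `T' e₀`.
    obtain ⟨e₀, he₀⟩ := hSne
    calc (F.filter (fun T => e ∉ T)).inf' (hne e) (fun T => ∑ a ∈ T, c a)
        ≤ ∑ a ∈ S, c a := inf'_le _ (mem_filter.2 ⟨hS, he⟩)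
      _ ≤ ∑ a ∈ T' e₀, c a := hcheap _ (hT' e₀ he₀).1
      _ ≤ S.sup' ⟨e₀, he₀⟩ fun e => ∑ a ∈ T' e, c a := le_sup' (fun e => ∑ a ∈ T' e, c a) he₀

theorem natCast_mul_two_zpow_sub_le (k n : ℕ) :
    (k : ℝ) * (2 : ℝ) ^ ((n : ℤ) - k) ≤ (2 : ℝ) ^ (n : ℤ) := by
  have hk : (k : ℝ) ≤ (2 : ℝ) ^ (k : ℤ) := by
    rw [zpow_natCast]
    exact_mod_cast Nat.lt_two_pow_self.le
  calc (k : ℝ) * (2 : ℝ) ^ ((n : ℤ) - k)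
      ≤ (2 : ℝ) ^ (k : ℤ) * (2 : ℝ) ^ ((n : ℤ) - k) := by gcongr
    _ = (2 : ℝ) ^ (n : ℤ) := by rw [← zpow_add₀ two_ne_zero, add_sub_cancel]

theorem mp_frugality_chain_general {α : Type*} [Fintype α] [DecidableEq α]
    (F : Finset (Finset α)) (c : α → ℝ) (hc : ∀ e, 0 ≤ c e)
    (S Sstar : Finset α) (hS : S ∈ F)
    (hSne : S.Nonempty)
    (hcheap : ∀ T ∈ F, ∑ a ∈ S, c a ≤ ∑ a ∈ T, c a)
    (hne : ∀ e, (F.filter (fun T => e ∉ T)).Nonempty)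
    (T' : α → Finset α)
    (hT' : ∀ e ∈ S, T' e ∈ F ∧ e ∉ T' e ∧
      (∑ a ∈ T' e, c a) =
        (F.filter (fun T => e ∉ T)).inf' (hne e) (fun T => ∑ a ∈ T, c a)) :
    (2 : ℝ) ^ ((Fintype.card α : ℤ) - (Sstar.card : ℤ)) *
        ∑ e ∈ Sstar, (F.filter (fun T => e ∉ T)).inf' (hne e) (fun T => ∑ a ∈ T, c a) ≤
      (Sstar.card : ℝ) * (2 : ℝ) ^ ((Fintype.card α : ℤ) - (Sstar.card : ℤ)) *
        (S.sup' hSne fun e => ∑ a ∈ T' e, c a) ∧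
    (Sstar.card : ℝ) * (2 : ℝ) ^ ((Fintype.card α : ℤ) - (Sstar.card : ℤ)) *
        (S.sup' hSne fun e => ∑ a ∈ T' e, c a) ≤
      (2 : ℝ) ^ (Fintype.card α : ℤ) * (S.sup' hSne fun e => ∑ a ∈ T' e, c a) := by
  have hsum_le : ∑ e ∈ Sstar, (F.filter (fun T => e ∉ T)).inf' (hne e) (fun T => ∑ a ∈ T, c a) ≤
      Sstar.card * S.sup' hSne fun e => ∑ a ∈ T' e, c a := by
    rw [← nsmul_eq_mul]
    exact sum_le_card_nsmul _ _ _ fun e _ => inf'_sum_avoiding_le_sup' hne hS hSne hcheap hT' e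
  have hsup_nonneg : 0 ≤ S.sup' hSne fun e => ∑ a ∈ T' e, c a := by
    obtain ⟨e₀, he₀⟩ := hSne
    exact (sum_nonneg fun a _ => hc a).trans (le_sup' (fun e => ∑ a ∈ T' e, c a) he₀)
  refine ⟨?_, ?_⟩
  · rw [mul_comm (Sstar.card : ℝ), mul_assoc]
    gcongr
  · gcongr
    exact natCast_mul_two_zpow_sub_le _ _

/-- Chain of inequalities bounding the MP payment by `2^n · max_{e∈S} c(T'_e)`. -/
theorem mp_frugality_chain {α : Type*} [Fintype α] [DecidableEq α]
    (F : Finset (Finset α)) (c : α → ℝ) (hc : ∀ e, 0 ≤ c e)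
    (S Sstar : Finset α) (hS : S ∈ F) (hSstar : Sstar ∈ F)
    (hSne : S.Nonempty) (hSstarne : Sstar.Nonempty)
    (hcheap : ∀ T ∈ F, ∑ a ∈ S, c a ≤ ∑ a ∈ T, c a)
    (hmin : ∀ T ∈ F,
      (∑ a ∈ Sstar, c a) * (2 : ℝ) ^ ((Sstar.card : ℤ) - 1) ≤
        (∑ a ∈ T, c a) * (2 : ℝ) ^ ((T.card : ℤ) - 1))
    (hne : ∀ e, (F.filter (fun T => e ∉ T)).Nonempty)
    (T' : α → Finset α)
    (hT' : ∀ e ∈ S, T' e ∈ F ∧ e ∉ T' e ∧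
      (∑ a ∈ T' e, c a) =
        (F.filter (fun T => e ∉ T)).inf' (hne e) (fun T => ∑ a ∈ T, c a)) :
    (2 : ℝ) ^ ((Fintype.card α : ℤ) - (Sstar.card : ℤ)) *
        ∑ e ∈ Sstar, (F.filter (fun T => e ∉ T)).inf' (hne e) (fun T => ∑ a ∈ T, c a) ≤
      (Sstar.card : ℝ) * (2 : ℝ) ^ ((Fintype.card α : ℤ) - (Sstar.card : ℤ)) *
        (S.sup' hSne fun e => ∑ a ∈ T' e, c a) ∧
    (Sstar.card : ℝ) * (2 : ℝ) ^ ((Fintype.card α : ℤ) - (Sstar.card : ℤ)) *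
        (S.sup' hSne fun e => ∑ a ∈ T' e, c a) ≤
      (2 : ℝ) ^ (Fintype.card α : ℤ) * (S.sup' hSne fun e => ∑ a ∈ T' e, c a) :=
  mp_frugality_chain_general F c hc S Sstar hS hSne hcheap hne T' hT'
end

section
/- Let τ : ℕ × ℕ → ℝ≥0 be a doubly-indexed family of nonnegative thresholds satisfying, for all i, m: τ(i, m) ≥ τ(i, m+1) + τ(i+1, m+1). Then for every k ≥ 0 and every d ≥ 0 there exists h ≤ d such that 2^{−d} · Σ_{i=0}^{k} τ(i, k) ≥ Σ_{i=h}^{k+h} τ(i, k+d). -/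
/-- Windowed-sum lemma: under the threshold recursion, for every `k` and `d`
there is an `h ≤ d` with `Σ_{i=h}^{k+h} τ(i,k+d) ≤ 2^{−d} · Σ_{i=0}^{k} τ(i,k)`. -/
theorem windowed_sum_lemma (τ : ℕ → ℕ → ℝ) (hnn : ∀ i m, 0 ≤ τ i m)
    (hrec : ∀ i m, τ i (m + 1) + τ (i + 1) (m + 1) ≤ τ i m) :
    ∀ k d : ℕ, ∃ h ≤ d,
      ∑ i ∈ Finset.Icc h (k + h), τ i (k + d) ≤
        (2 : ℝ) ^ (-(d : ℤ)) * ∑ i ∈ Finset.Icc 0 k, τ i k := by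
  intro k d
  induction d with
  | zero =>
    exact ⟨0, le_refl 0, by simp⟩
  | succ d ih =>
    obtain ⟨h, hhd, hle⟩ := ih
    -- shift sum
    have hshift : ∑ i ∈ Finset.Icc (h + 1) (k + h + 1), τ i (k + (d + 1))
        = ∑ i ∈ Finset.Icc h (k + h), τ (i + 1) (k + (d + 1)) := by
      rw [← Finset.map_add_right_Icc h (k + h) 1, Finset.sum_map]
      rfl
    have hkey : ∑ i ∈ Finset.Icc h (k + h), τ i (k + (d + 1))
        + ∑ i ∈ Finset.Icc (h + 1) (k + h + 1), τ i (k + (d + 1))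
        ≤ ∑ i ∈ Finset.Icc h (k + h), τ i (k + d) := by
      rw [hshift, ← Finset.sum_add_distrib]
      apply Finset.sum_le_sum
      intro i _
      exact hrec i (k + d)
    set A := ∑ i ∈ Finset.Icc h (k + h), τ i (k + (d + 1)) with hA
    set B := ∑ i ∈ Finset.Icc (h + 1) (k + h + 1), τ i (k + (d + 1)) with hB
    have hC : A + B ≤ (2 : ℝ) ^ (-(d : ℤ)) * ∑ i ∈ Finset.Icc 0 k, τ i k :=
      le_trans hkey hle
    have hpow : (2 : ℝ) ^ (-((d : ℕ) + 1 : ℤ)) = (2 : ℝ) ^ (-(d : ℤ)) / 2 := by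
      rw [neg_add, zpow_add₀ (by norm_num : (2:ℝ) ≠ 0)]
      norm_num
      ring
    rcases le_total A B with hAB | hAB
    · refine ⟨h, le_trans hhd (Nat.le_succ d), ?_⟩
      have : A ≤ ((2 : ℝ) ^ (-(d : ℤ)) * ∑ i ∈ Finset.Icc 0 k, τ i k) / 2 := by
        linarith
      calc A ≤ ((2 : ℝ) ^ (-(d : ℤ)) * ∑ i ∈ Finset.Icc 0 k, τ i k) / 2 := this
        _ = (2 : ℝ) ^ (-((d : ℕ) + 1 : ℤ)) * ∑ i ∈ Finset.Icc 0 k, τ i k := by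
            rw [hpow]; ring
        _ = (2 : ℝ) ^ (-((d + 1 : ℕ) : ℤ)) * ∑ i ∈ Finset.Icc 0 k, τ i k := by
            norm_num
    · refine ⟨h + 1, Nat.succ_le_succ hhd, ?_⟩
      have : B ≤ ((2 : ℝ) ^ (-(d : ℤ)) * ∑ i ∈ Finset.Icc 0 k, τ i k) / 2 := by
        linarith
      calc ∑ i ∈ Finset.Icc (h+1) (k + (h+1)), τ i (k + (d+1))
          = B := by rw [hB]; ring_nf
        _ ≤ ((2 : ℝ) ^ (-(d : ℤ)) * ∑ i ∈ Finset.Icc 0 k, τ i k) / 2 := this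
        _ = (2 : ℝ) ^ (-((d : ℕ) + 1 : ℤ)) * ∑ i ∈ Finset.Icc 0 k, τ i k := by
            rw [hpow]; ring
        _ = (2 : ℝ) ^ (-((d + 1 : ℕ) : ℤ)) * ∑ i ∈ Finset.Icc 0 k, τ i k := by
            norm_num
end

section
/- Under the hypotheses of the threshold recursion τ(i, m) ≥ τ(i, m+1) + τ(i+1, m+1) for nonnegative τ, for every d ≥ 0 there exists h ≤ d with τ(h, d) ≤ 2^{−d} · τ(0, 0). -/
/-! Since `τ(i, m+1) + τ(i+1, m+1) ≤ τ(i, m)`, the smaller of the two successors of `τ(i, m)` is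
at most half of it. Following the smaller successor from `τ(0, 0)` for `d` steps reaches an entry
of row `d` that is at most `2^{-d} τ(0, 0)`. -/

section Threshold

variable {K : Type*} [Field K] [LinearOrder K] [IsStrictOrderedRing K] {τ : ℕ → ℕ → K}

lemma exists_succ_two_mul_le (hrec : ∀ i m, τ i (m + 1) + τ (i + 1) (m + 1) ≤ τ i m) (i m : ℕ) :
    ∃ j ≤ i + 1, 2 * τ j (m + 1) ≤ τ i m := by
  rcases le_total (τ i (m + 1)) (τ (i + 1) (m + 1)) with hle | hle
  · exact ⟨i, Nat.le_succ i, by linarith [hrec i m]⟩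
  · exact ⟨i + 1, le_rfl, by linarith [hrec i m]⟩

lemma exists_pow_mul_le (hrec : ∀ i m, τ i (m + 1) + τ (i + 1) (m + 1) ≤ τ i m) (d : ℕ) :
    ∃ h ≤ d, 2 ^ d * τ h d ≤ τ 0 0 := by
  induction d with
  | zero => exact ⟨0, le_rfl, by simp⟩
  | succ d ih =>
    obtain ⟨h, hhd, hh⟩ := ih
    obtain ⟨j, hjh, hj⟩ := exists_succ_two_mul_le hrec h d
    refine ⟨j, by omega, ?_⟩
    calc 2 ^ (d + 1) * τ j (d + 1) = 2 ^ d * (2 * τ j (d + 1)) := by ring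
      _ ≤ 2 ^ d * τ h d := by gcongr
      _ ≤ τ 0 0 := hh

end Threshold

theorem small_threshold_exists_general (τ : ℕ → ℕ → ℝ)
    (hrec : ∀ i m, τ i (m + 1) + τ (i + 1) (m + 1) ≤ τ i m) :
    ∀ d : ℕ, ∃ h ≤ d, τ h d ≤ (2 : ℝ) ^ (-(d : ℤ)) * τ 0 0 := by
  intro d
  obtain ⟨h, hhd, hh⟩ := exists_pow_mul_le hrec d
  refine ⟨h, hhd, ?_⟩
  rw [zpow_neg, zpow_natCast, inv_mul_eq_div, le_div_iff₀ (by positivity)]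
  linarith

/-- The `k = 0` case: some threshold among `τ(0,d), …, τ(d,d)` is at most `2^{−d}·τ(0,0)`. -/
theorem small_threshold_exists (τ : ℕ → ℕ → ℝ) (hnn : ∀ i m, 0 ≤ τ i m)
    (hrec : ∀ i m, τ i (m + 1) + τ (i + 1) (m + 1) ≤ τ i m) :
    ∀ d : ℕ, ∃ h ≤ d, τ h d ≤ (2 : ℝ) ^ (-(d : ℤ)) * τ 0 0 :=
  small_threshold_exists_general τ hrec
end

section
/- In the AP mechanism with reserve cost r ≥ 0, if the winning set S* has width w ≥ 1 (i.e., w agents own elements of S*), then the payment to each winning agent i satisfies p_i ≤ r / 2^{w−1}, and hence the total payment Σ_i p_i ≤ w · r / 2^{w−1} ≤ r. -/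
lemma natCast_le_two_zpow_natCast_sub_one (n : ℕ) : (n : ℝ) ≤ (2 : ℝ) ^ ((n : ℤ) - 1) := by
  cases n with
  | zero => simp only [Nat.cast_zero]; positivity
  | succ m =>
    have hm : m + 1 ≤ 2 ^ m := Nat.lt_two_pow_self
    rw [Nat.cast_add_one, Nat.cast_add_one, add_sub_cancel_right, zpow_natCast]
    exact_mod_cast hm

lemma natCast_mul_div_two_zpow_sub_one_le {r : ℝ} (hr : 0 ≤ r) (n : ℕ) :
    (n : ℝ) * (r / (2 : ℝ) ^ ((n : ℤ) - 1)) ≤ r := by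
  have hpos : (0 : ℝ) < 2 ^ ((n : ℤ) - 1) := zpow_pos two_pos _
  rw [mul_div_assoc', div_le_iff₀ hpos, mul_comm r]
  exact mul_le_mul_of_nonneg_right (natCast_le_two_zpow_natCast_sub_one n) hr

lemma min_sub_add_penalty_le (r b : ℝ) {c : ℝ} (hc : 0 ≤ c) (w : ℤ) :
    min r b - (c + (1 - (2 : ℝ) ^ (1 - w)) * r) ≤ r / (2 : ℝ) ^ (w - 1) := by
  have hdiv : r / (2 : ℝ) ^ (w - 1) = (2 : ℝ) ^ (1 - w) * r := by
    rw [← neg_sub w 1, zpow_neg, div_eq_inv_mul]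
  rw [hdiv]
  linarith [min_le_left r b]

theorem ap_no_loss_general {ι : Type*} (r : ℝ) (hr : 0 ≤ r)
    (W : Finset ι) (w : ℕ) (hcard : W.card = w)
    (B C p : ι → ℝ) (hC : ∀ i ∈ W, 0 ≤ C i)
    (hp : ∀ i ∈ W, p i = min r (B i) - (C i + (1 - (2 : ℝ) ^ (1 - (w : ℤ))) * r)) :
    (∀ i ∈ W, p i ≤ r / (2 : ℝ) ^ ((w : ℤ) - 1)) ∧
      ∑ i ∈ W, p i ≤ (w : ℝ) * (r / (2 : ℝ) ^ ((w : ℤ) - 1)) ∧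
        (w : ℝ) * (r / (2 : ℝ) ^ ((w : ℤ) - 1)) ≤ r := by
  have hbound : ∀ i ∈ W, p i ≤ r / (2 : ℝ) ^ ((w : ℤ) - 1) := fun i hi =>
    (hp i hi).trans_le (min_sub_add_penalty_le r (B i) (hC i hi) w)
  refine ⟨hbound, ?_, natCast_mul_div_two_zpow_sub_one_le hr w⟩
  calc ∑ i ∈ W, p i ≤ ∑ _i ∈ W, r / (2 : ℝ) ^ ((w : ℤ) - 1) := Finset.sum_le_sum hbound
    _ = (w : ℝ) * (r / (2 : ℝ) ^ ((w : ℤ) - 1)) := by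
      rw [Finset.sum_const, hcard, nsmul_eq_mul]

/-- AP no-loss: each winner's payment is at most `r/2^{w−1}`, the total is at most
`w · r / 2^{w−1}`, which never exceeds the reserve cost `r`. -/
theorem ap_no_loss {ι : Type*} (r : ℝ) (hr : 0 ≤ r)
    (W : Finset ι) (w : ℕ) (hw : 1 ≤ w) (hcard : W.card = w)
    (B C p : ι → ℝ) (hC : ∀ i ∈ W, 0 ≤ C i)
    (hp : ∀ i ∈ W, p i = min r (B i) - (C i + (1 - (2 : ℝ) ^ (1 - (w : ℤ))) * r)) :
    (∀ i ∈ W, p i ≤ r / (2 : ℝ) ^ ((w : ℤ) - 1)) ∧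
      ∑ i ∈ W, p i ≤ (w : ℝ) * (r / (2 : ℝ) ^ ((w : ℤ) - 1)) ∧
        (w : ℝ) * (r / (2 : ℝ) ^ ((w : ℤ) - 1)) ≤ r :=
  ap_no_loss_general r hr W w hcard B C p hC hp
end

section
/- In the AP mechanism, suppose agent i splits into pseudo-agents i' and i'' with O_{i'} ∪ O_{i''} = O_i, both winning in the same winning set S* of width w (so the width becomes w+1 after the split). If B^{−i'} ≤ r, B^{−i''} ≤ B^{−i}, then the post-split total payment B^{−i'} + B^{−i''} − 2c(S*) + c(S* ∩ O_i) − 2·pen(r, w+1) is at most the pre-split payment B^{−i} − (c(S* \ O_i) + pen(r, w)). -/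
/-!
With `pen r w = (1 - 2^(1-w)) r`, doubling the width-`(w+1)` penalty overshoots the width-`w`
penalty by exactly `r`, i.e. `2 pen r (w+1) - pen r w = r`. Bounding `B' ≤ r` and `B'' ≤ B` and
using `c(S* ∩ Oᵢ) + c(S* \ Oᵢ) = c(S*)`, the post-split payment falls short of the pre-split one
by at least `c(S*) ≥ 0`.
-/

noncomputable def pen (r : ℝ) (w : ℤ) : ℝ := (1 - (2 : ℝ) ^ (1 - w)) * r

theorem two_mul_pen_succ_sub_pen (r : ℝ) (w : ℤ) : 2 * pen r (w + 1) - pen r w = r := by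
  have hpow : (2 : ℝ) ^ (1 - w) = 2 * 2 ^ (1 - (w + 1)) := by
    rw [← zpow_one_add₀ two_ne_zero]
    ring_nf
  rw [pen, pen, hpow]
  ring

theorem ap_split_not_profitable_general {α : Type*} [DecidableEq α]
    (r : ℝ) (w : ℕ)
    (c : α → ℝ) (hc : ∀ a, 0 ≤ c a)
    (Sstar Oi : Finset α)
    (B B' B'' : ℝ) (hB' : B' ≤ r) (hB'' : B'' ≤ B) :
    B' + B'' - 2 * (∑ a ∈ Sstar, c a) + (∑ a ∈ Sstar ∩ Oi, c a)
        - 2 * ((1 - (2 : ℝ) ^ (1 - ((w : ℤ) + 1))) * r) ≤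
      B - ((∑ a ∈ Sstar \ Oi, c a) + (1 - (2 : ℝ) ^ (1 - (w : ℤ))) * r) := by
  have hpen := two_mul_pen_succ_sub_pen r w
  have hsplit := Finset.sum_inter_add_sum_sdiff Sstar Oi c
  have hcost : 0 ≤ ∑ a ∈ Sstar, c a := Finset.sum_nonneg fun a _ => hc a
  unfold pen at hpen
  linarith

/-- Splitting identifiers in AP does not increase the payment: the post-split total
payment is at most the pre-split payment. -/
theorem ap_split_not_profitable {α : Type*} [DecidableEq α]
    (r : ℝ) (hr : 0 ≤ r) (w : ℕ) (hw : 1 ≤ w)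
    (c : α → ℝ) (hc : ∀ a, 0 ≤ c a)
    (Sstar Oi : Finset α)
    (B B' B'' : ℝ) (hB' : B' ≤ r) (hB'' : B'' ≤ B) :
    B' + B'' - 2 * (∑ a ∈ Sstar, c a) + (∑ a ∈ Sstar ∩ Oi, c a)
        - 2 * ((1 - (2 : ℝ) ^ (1 - ((w : ℤ) + 1))) * r) ≤
      B - ((∑ a ∈ Sstar \ Oi, c a) + (1 - (2 : ℝ) ^ (1 - (w : ℤ))) * r) :=
  ap_split_not_profitable_general r w c hc Sstar Oi B B' B'' hB' hB''
end

section
/- In the MP mechanism, the selection rule S* = argmin_{S∈F} b(S)·2^{|S|−1} is monotone in each bid: if agent e wins with bid b_e, she also wins with any bid b'_e < b_e (all other bids fixed). Consequently each winner's payment equals her threshold bid, and bidding the true cost is a dominant strategy for single-element agents who do not self-divide. -/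
/-!
Lowering `e`'s bid lowers the objective of every set containing `e` and leaves all other
objectives unchanged. So the best set containing `e` under the new bids beats the old optimum
`S*`, which in turn beat every set avoiding `e`, whose objective has not moved.
-/

open Finset

theorem exists_min_of_le_of_eq_off {ι β : Type*} [LinearOrder β] (F : Finset ι)
    (P : ι → Prop) [DecidablePred P] (f f' : ι → β) (hle : ∀ i ∈ F, P i → f' i ≤ f i)
    (heq : ∀ i ∈ F, ¬ P i → f' i = f i)
    (i₀ : ι) (hi₀F : i₀ ∈ F) (hi₀P : P i₀) (hmin : ∀ j ∈ F, f i₀ ≤ f j) :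
    ∃ i ∈ F, P i ∧ ∀ j ∈ F, f' i ≤ f' j := by
  obtain ⟨i, hi, hi_min⟩ := exists_min_image (F.filter P) f' ⟨i₀, mem_filter.2 ⟨hi₀F, hi₀P⟩⟩
  obtain ⟨hiF, hiP⟩ := mem_filter.1 hi
  refine ⟨i, hiF, hiP, fun j hjF => ?_⟩
  by_cases hjP : P j
  · exact hi_min j (mem_filter.2 ⟨hjF, hjP⟩)
  · calc f' i ≤ f' i₀ := hi_min i₀ (mem_filter.2 ⟨hi₀F, hi₀P⟩)
      _ ≤ f i₀ := hle i₀ hi₀F hi₀P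
      _ ≤ f j := hmin j hjF
      _ = f' j := (heq j hjF hjP).symm

theorem sum_update_sub_mul_le {α : Type*} [DecidableEq α] {S : Finset α} {e : α}
    (he : e ∈ S) (b : α → ℝ) {δ c : ℝ} (hδ : 0 ≤ δ) (hc : 0 ≤ c) :
    (∑ a ∈ S, Function.update b e (b e - δ) a) * c ≤ (∑ a ∈ S, b a) * c := by
  refine mul_le_mul_of_nonneg_right ?_ hc
  rw [sum_update_of_mem he, sum_eq_add_sum_sdiff_singleton_of_mem he b]
  linarith

/-- Monotonicity of the MP selection rule: if a set containing `e` minimizes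
`b(S)·2^{|S|−1}`, then after lowering `e`'s bid by `δ > 0`, some set containing `e`
minimizes the modified objective. -/
theorem mp_selection_monotone {α : Type*} [DecidableEq α]
    (F : Finset (Finset α)) (b : α → ℝ) (e : α) (δ : ℝ) (hδ : 0 < δ)
    (Sstar : Finset α) (hSstar : Sstar ∈ F) (heS : e ∈ Sstar)
    (hmin : ∀ T ∈ F,
      (∑ a ∈ Sstar, b a) * (2 : ℝ) ^ ((Sstar.card : ℤ) - 1) ≤
        (∑ a ∈ T, b a) * (2 : ℝ) ^ ((T.card : ℤ) - 1)) :
    ∃ S' ∈ F, e ∈ S' ∧ ∀ T ∈ F,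
      (∑ a ∈ S', Function.update b e (b e - δ) a) * (2 : ℝ) ^ ((S'.card : ℤ) - 1) ≤
        (∑ a ∈ T, Function.update b e (b e - δ) a) * (2 : ℝ) ^ ((T.card : ℤ) - 1) := by
  refine exists_min_of_le_of_eq_off F (e ∈ ·)
    (fun S => (∑ a ∈ S, b a) * (2 : ℝ) ^ ((S.card : ℤ) - 1))
    (fun S => (∑ a ∈ S, Function.update b e (b e - δ) a) * (2 : ℝ) ^ ((S.card : ℤ) - 1))
    (fun S _ heS => sum_update_sub_mul_le heS b hδ.le (by positivity))
    (fun S _ heS => by simp only [sum_update_of_notMem heS]) Sstar hSstar heS hmin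
end
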